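/- arXiv:1011.1247 — 6 statements merged into one kernel-verified Lean document; each statement's English description precedes it below -/
import Mathlib

section
/- Let E and F be real normed vector spaces. Let N_sym be a norm on E × F that extends the norms of E and F and satisfies the symmetry condition N_sym(e, −f) = N_sym(e, f) for all e ∈ E, f ∈ F. Let N_any be any norm on E × F that also extends the norms of E and F. Then N_any(e, f) ≤ 2 · N_sym(e, f) for all e ∈ E, f ∈ F. -/
namespace Seminorm

variable {𝕜 E F : Type*} [RCLike 𝕜] [AddCommGroup E] [Module 𝕜 E] [AddCommGroup F] [Module 𝕜 F]

theorem map_two_smul (p : Seminorm 𝕜 E) (x : E) : p ((2 : 𝕜) • x) = 2 * p x := by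
  rw [map_smul_eq_mul, RCLike.norm_two]

section Symmetric

variable (p : Seminorm 𝕜 (E × F)) (hp : ∀ (e : E) (f : F), p (e, -f) = p (e, f))
include hp

-- `(e, 0)` and `(0, f)` are the half-sum and half-difference of `(e, f)` and `(e, -f)`.
theorem apply_fst_le_of_apply_neg_snd (e : E) (f : F) : p (e, 0) ≤ p (e, f) := by
  have hsum : (2 : 𝕜) • (e, (0 : F)) = (e, f) + (e, -f) := by
    ext <;> simp [two_smul]
  have := map_add_le_add p (e, f) (e, -f)
  rw [← hsum, map_two_smul, hp] at this
  linarith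

theorem apply_snd_le_of_apply_neg_snd (e : E) (f : F) : p (0, f) ≤ p (e, f) := by
  have hdiff : (2 : 𝕜) • ((0 : E), f) = (e, f) - (e, -f) := by
    ext <;> simp [two_smul]
  have := map_sub_le_add p (e, f) (e, -f)
  rw [← hdiff, map_two_smul, hp] at this
  linarith

end Symmetric

theorem apply_le_apply_fst_add_apply_snd (p : Seminorm 𝕜 (E × F)) (e : E) (f : F) :
    p (e, f) ≤ p (e, 0) + p (0, f) := by
  simpa using map_add_le_add p (e, 0) (0, f)

end Seminorm

/-- If `N_sym` is a seminorm on `E × F` extending the norms of `E` and `F` and satisfying the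
symmetry condition `N_sym (e, -f) = N_sym (e, f)`, and `N_any` is any seminorm on `E × F`
extending the norms of `E` and `F`, then `N_any ≤ 2 • N_sym`. -/
theorem le_two_mul_of_symmetric_norm
    {E F : Type*} [NormedAddCommGroup E] [NormedSpace ℝ E]
    [NormedAddCommGroup F] [NormedSpace ℝ F]
    (Nsym Nany : Seminorm ℝ (E × F))
    (hsymE : ∀ e : E, Nsym (e, 0) = ‖e‖) (hsymF : ∀ f : F, Nsym (0, f) = ‖f‖)
    (hsym : ∀ (e : E) (f : F), Nsym (e, -f) = Nsym (e, f))
    (hanyE : ∀ e : E, Nany (e, 0) = ‖e‖) (hanyF : ∀ f : F, Nany (0, f) = ‖f‖) :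
    ∀ (e : E) (f : F), Nany (e, f) ≤ 2 * Nsym (e, f) := by
  intro e f
  have hE := Nsym.apply_fst_le_of_apply_neg_snd hsym e f
  have hF := Nsym.apply_snd_le_of_apply_neg_snd hsym e f
  calc Nany (e, f) ≤ Nany (e, 0) + Nany (0, f) := Nany.apply_le_apply_fst_add_apply_snd e f
    _ = Nsym (e, 0) + Nsym (0, f) := by rw [hanyE, hanyF, hsymE, hsymF]
    _ ≤ 2 * Nsym (e, f) := by linarith
end

section
/- Let C be a unital C*-algebra, let φ be a state on C, and let A and B be closed unital star-subalgebras of C that commute elementwise, i.e. a·b = b·a for all a ∈ A and b ∈ B. If the restriction of φ to A is a pure state of A, then φ(a·b) = φ(a)·φ(b) for all a ∈ A and b ∈ B. -/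
/-!
Let `b ∈ B` with `0 ≤ b ≤ 1` and `t = φ b ∈ (0, 1)`. Since `b` commutes with `A`, we have
`a⋆ a b = a⋆ b a`, so `a ↦ φ (a b) / t` and `a ↦ φ (a (1 - b)) / (1 - t)` are states of `A`, and
`φ|_A` is their `t`-convex combination. Purity makes them equal, hence both equal `φ|_A`, which is
`φ (a b) = φ a φ b`. The elements `b` with this factorization form a subspace containing the
scalars. A self-adjoint `b` is a scalar plus a multiple of `1/2 + s b`, which for `‖s b‖ ≤ 1/4`
lies between `1/4` and `3/4` and so is of the above kind; an arbitrary `b ∈ B` is `ℜ b + i ℑ b`.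
-/

open scoped ComplexOrder

def IsState {B : Type*} [Ring B] [StarRing B] [Module ℂ B] [TopologicalSpace B]
    (φ : B →L[ℂ] ℂ) : Prop :=
  φ 1 = 1 ∧ ∀ x : B, 0 ≤ φ (star x * x)

open scoped ComplexStarModule

section

variable {R : Type*} [Ring R] [StarRing R]

section StarSubalgebra

variable [Algebra ℂ R] [StarModule ℂ R] {A : StarSubalgebra ℂ R} {b : R}

lemma StarSubalgebra.realPart_mem (hb : b ∈ A) : (ℜ b : R) ∈ A := by
  rw [realPart_apply_coe, ← Complex.coe_smul]
  exact SMulMemClass.smul_mem _ (add_mem hb (star_mem hb))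

lemma StarSubalgebra.imaginaryPart_mem (hb : b ∈ A) : (ℑ b : R) ∈ A := by
  rw [imaginaryPart_apply_coe, ← Complex.coe_smul]
  exact SMulMemClass.smul_mem _ (SMulMemClass.smul_mem _ (sub_mem hb (star_mem hb)))

end StarSubalgebra

variable [TopologicalSpace R]

lemma IsState.apply_nonneg [PartialOrder R] [StarOrderedRing R] [Module ℂ R]
    {φ : R →L[ℂ] ℂ} (hφ : IsState φ) {v : R} (hv : 0 ≤ v) : 0 ≤ φ v := by
  rw [StarOrderedRing.nonneg_iff] at hv
  induction hv using AddSubmonoid.closure_induction with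
  | mem _ h => obtain ⟨x, rfl⟩ := h; exact hφ.2 x
  | zero => simp
  | add _ _ _ _ h₁ h₂ => rw [map_add]; exact add_nonneg h₁ h₂

variable [Algebra ℂ R]

def factorSubmodule (φ : R →L[ℂ] ℂ) (A : Set R) : Submodule ℂ R where
  carrier := {b | ∀ a ∈ A, φ (a * b) = φ a * φ b}
  add_mem' {b c} hb hc a ha := by simp only [mul_add, map_add, hb a ha, hc a ha]
  zero_mem' := by simp
  smul_mem' z b hb a ha := by
    simp only [mul_smul_comm, map_smul, hb a ha, smul_eq_mul]
    ring

variable [StarModule ℂ R]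

/-- `φ|_A` is not a proper convex combination of two distinct states of `A`; it is itself a state
when `φ` is. -/
def IsPureOn (φ : R →L[ℂ] ℂ) (A : StarSubalgebra ℂ R) : Prop :=
  ∀ ψ₁ ψ₂ : ↥A →L[ℂ] ℂ, IsState ψ₁ → IsState ψ₂ → ∀ t : ℝ, 0 < t → t < 1 →
    (∀ a : ↥A, φ ↑a = t * ψ₁ a + (1 - t) * ψ₂ a) → ψ₁ = ψ₂

variable [ContinuousMul R]

noncomputable def restrictMulRight (φ : R →L[ℂ] ℂ) (A : StarSubalgebra ℂ R) (c : R) :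
    ↥A →L[ℂ] ℂ where
  toFun a := φ (a * c)
  map_add' a a' := by simp [add_mul]
  map_smul' z a := by simp
  cont := φ.continuous.comp ((continuous_mul_const c).comp continuous_subtype_val)

@[simp]
lemma restrictMulRight_apply (φ : R →L[ℂ] ℂ) (A : StarSubalgebra ℂ R) (c : R) (a : A) :
    restrictMulRight φ A c a = φ (a * c) :=
  rfl

variable [PartialOrder R] [StarOrderedRing R] {φ : R →L[ℂ] ℂ} {A : StarSubalgebra ℂ R}

lemma IsState.inv_smul_restrictMulRight (hφ : IsState φ) {b : R} (hb : 0 ≤ b)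
    (hbA : ∀ a ∈ A, Commute a b) {z : ℂ} (hφb : φ b = z) (hz : 0 < z) :
    IsState (z⁻¹ • restrictMulRight φ A b) := by
  refine ⟨by simp [hφb, hz.ne'], fun x ↦ ?_⟩
  have hconj : star (x : R) * x * b = star (x : R) * b * x := by
    rw [mul_assoc, (hbA x x.2).eq, mul_assoc]
  simp only [smul_apply, restrictMulRight_apply, MulMemClass.coe_mul, StarMemClass.coe_star,
    hconj, smul_eq_mul]
  exact mul_nonneg (by simpa using hz.le) (hφ.apply_nonneg (star_left_conjugate_nonneg hb _))

lemma IsState.mem_factorSubmodule_of_isPureOn (hφ : IsState φ) (hpure : IsPureOn φ A) {b : R}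
    (hb₀ : 0 ≤ b) (hb₁ : b ≤ 1) (hbA : ∀ a ∈ A, Commute a b) {t : ℝ} (hφb : φ b = t)
    (ht₀ : 0 < t) (ht₁ : t < 1) : b ∈ factorSubmodule φ A := by
  have hφb' : φ (1 - b) = 1 - t := by rw [map_sub, hφ.1, hφb]
  have ht₀' : (0 : ℂ) < t := by exact_mod_cast ht₀
  have ht₁' : (0 : ℂ) < 1 - t := sub_pos.2 (by exact_mod_cast ht₁)
  set ψ₁ := (t : ℂ)⁻¹ • restrictMulRight φ A b
  set ψ₂ := (1 - t : ℂ)⁻¹ • restrictMulRight φ A (1 - b)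
  have hdecomp (a : A) : φ a = t * ψ₁ a + (1 - t) * ψ₂ a := by
    simp only [ψ₁, ψ₂, smul_apply, restrictMulRight_apply, smul_eq_mul]
    rw [mul_inv_cancel_left₀ ht₀'.ne', mul_inv_cancel_left₀ ht₁'.ne', ← map_add, ← mul_add,
      add_sub_cancel, mul_one]
  have hψ : ψ₁ = ψ₂ := hpure ψ₁ ψ₂ (hφ.inv_smul_restrictMulRight hb₀ hbA hφb ht₀')
    (hφ.inv_smul_restrictMulRight (sub_nonneg.2 hb₁)
      (fun a ha ↦ (Commute.one_right a).sub_right (hbA a ha)) hφb' ht₁')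
    t ht₀ ht₁ hdecomp
  intro a ha
  have hφa := hdecomp ⟨a, ha⟩
  rw [← hψ, ← add_mul, add_sub_cancel, one_mul] at hφa
  simp only [ψ₁, smul_apply, restrictMulRight_apply, smul_eq_mul] at hφa
  rw [hφb, hφa]
  field_simp

end

section CStarAlgebra

variable {C : Type*} [CStarAlgebra C] {φ : C →L[ℂ] ℂ}

lemma IsState.apply_algebraMap (hφ : IsState φ) (r : ℝ) : φ (algebraMap ℝ C r) = r := by
  rw [Algebra.algebraMap_eq_smul_one, ContinuousLinearMap.map_smul_of_tower, hφ.1,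
    Complex.real_smul, mul_one]

lemma IsState.algebraMap_mem_factorSubmodule (hφ : IsState φ) (A : Set C) (r : ℝ) :
    algebraMap ℝ C r ∈ factorSubmodule φ A := fun a _ ↦ by
  rw [hφ.apply_algebraMap, ← Algebra.commutes, Algebra.algebraMap_eq_smul_one, smul_mul_assoc,
    one_mul, ContinuousLinearMap.map_smul_of_tower, Complex.real_smul, mul_comm]

variable [PartialOrder C] [StarOrderedRing C]

lemma IsState.exists_eq_ofReal_mem_Icc (hφ : IsState φ) {v : C} {c d : ℝ}
    (hc : algebraMap ℝ C c ≤ v) (hd : v ≤ algebraMap ℝ C d) :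
    ∃ t : ℝ, φ v = t ∧ t ∈ Set.Icc c d := by
  have hc' := hφ.apply_nonneg (sub_nonneg.2 hc)
  have hd' := hφ.apply_nonneg (sub_nonneg.2 hd)
  rw [map_sub, hφ.apply_algebraMap, sub_nonneg] at hc' hd'
  have hre := Complex.eq_re_of_ofReal_le hc'
  rw [hre, Complex.real_le_real] at hc' hd'
  exact ⟨_, hre, hc', hd'⟩

lemma IsSelfAdjoint.algebraMap_add_mem_Icc {x : C} (hx : IsSelfAdjoint x) (r : ℝ) {ε : ℝ}
    (hε : ‖x‖ ≤ ε) :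
    algebraMap ℝ C (r - ε) ≤ algebraMap ℝ C r + x ∧
      algebraMap ℝ C r + x ≤ algebraMap ℝ C (r + ε) := by
  have hε' : algebraMap ℝ C ‖x‖ ≤ algebraMap ℝ C ε := algebraMap_mono C hε
  rw [map_sub, map_add, sub_eq_add_neg]
  exact ⟨by gcongr; exact hx.neg_algebraMap_norm_le_self.trans' (neg_le_neg hε'),
    by gcongr; exact hx.le_algebraMap_norm_self.trans hε'⟩

lemma IsState.mem_factorSubmodule_of_isSelfAdjoint {A : StarSubalgebra ℂ C} (hφ : IsState φ)
    (hpure : IsPureOn φ A) {b : C} (hb : IsSelfAdjoint b) (hbA : ∀ a ∈ A, Commute a b) :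
    b ∈ factorSubmodule φ A := by
  obtain ⟨s, hs, hsb⟩ : ∃ s : ℝ, 0 < s ∧ ‖s • b‖ ≤ 4⁻¹ := by
    refine ⟨(4 * (‖b‖ + 1))⁻¹, by positivity, ?_⟩
    rw [norm_smul, Real.norm_of_nonneg (by positivity), inv_mul_le_iff₀ (by positivity)]
    linarith [norm_nonneg b]
  obtain ⟨hlo, hhi⟩ := ((IsSelfAdjoint.all s).smul hb).algebraMap_add_mem_Icc 2⁻¹ hsb
  obtain ⟨t, hφt, ht₀, ht₁⟩ := hφ.exists_eq_ofReal_mem_Icc hlo hhi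
  have hmem : algebraMap ℝ C 2⁻¹ + s • b ∈ factorSubmodule φ A :=
    hφ.mem_factorSubmodule_of_isPureOn hpure ((algebraMap_nonneg C (by norm_num)).trans hlo)
      (hhi.trans (by simpa using algebraMap_mono C (by norm_num : (2⁻¹ + 4⁻¹ : ℝ) ≤ 1)))
      (fun a ha ↦ (Algebra.commute_algebraMap_right _ _).add_right ((hbA a ha).smul_right s))
      hφt (by linarith) (by linarith)
  have hsmem : s • b ∈ factorSubmodule φ A := by
    simpa using sub_mem hmem (hφ.algebraMap_mem_factorSubmodule A 2⁻¹)
  simpa [hs.ne'] using (factorSubmodule φ A).smul_of_tower_mem s⁻¹ hsmem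

end CStarAlgebra

theorem state_factors_of_pure_restriction_general
    {C : Type*} [CStarAlgebra C] (A B : StarSubalgebra ℂ C)
    (hcomm : ∀ a ∈ A, ∀ b ∈ B, a * b = b * a)
    (φ : C →L[ℂ] ℂ) (hφ : IsState φ)
    (hpure : ∀ ψ₁ ψ₂ : ↥A →L[ℂ] ℂ, IsState ψ₁ → IsState ψ₂ → ∀ t : ℝ, 0 < t → t < 1 →
      (∀ a : ↥A, φ ↑a = t * ψ₁ a + (1 - t) * ψ₂ a) → ψ₁ = ψ₂) :
    ∀ a ∈ A, ∀ b ∈ B, φ (a * b) = φ a * φ b := by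
  let : PartialOrder C := CStarAlgebra.spectralOrder C
  let : StarOrderedRing C := CStarAlgebra.spectralOrderedRing C
  have hselfAdjoint {x : C} (hx : x ∈ B) (hsa : IsSelfAdjoint x) : x ∈ factorSubmodule φ A :=
    hφ.mem_factorSubmodule_of_isSelfAdjoint hpure hsa fun a ha ↦ hcomm a ha x hx
  intro a ha b hb
  have hmem : b ∈ factorSubmodule φ A := realPart_add_I_smul_imaginaryPart b ▸
    add_mem (hselfAdjoint (B.realPart_mem hb) (ℜ b).2)
      (Submodule.smul_mem _ _ (hselfAdjoint (B.imaginaryPart_mem hb) (ℑ b).2))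
  exact hmem a ha

/-- If `φ` is a state on a unital C*-algebra `C`, `A` and `B` are closed unital star-subalgebras
of `C` which commute elementwise, and the restriction of `φ` to `A` is a pure state of `A`, then
`φ (a * b) = φ a * φ b` for all `a ∈ A`, `b ∈ B`. -/
theorem state_factors_of_pure_restriction
    {C : Type*} [CStarAlgebra C] (A B : StarSubalgebra ℂ C)
    (hA : IsClosed (A : Set C)) (hB : IsClosed (B : Set C))
    (hcomm : ∀ a ∈ A, ∀ b ∈ B, a * b = b * a)
    (φ : C →L[ℂ] ℂ) (hφ : IsState φ)
    (hpure : ∀ ψ₁ ψ₂ : ↥A →L[ℂ] ℂ, IsState ψ₁ → IsState ψ₂ → ∀ t : ℝ, 0 < t → t < 1 →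
      (∀ a : ↥A, φ ↑a = t * ψ₁ a + (1 - t) * ψ₂ a) → ψ₁ = ψ₂) :
    ∀ a ∈ A, ∀ b ∈ B, φ (a * b) = φ a * φ b :=
  state_factors_of_pure_restriction_general A B hcomm φ hφ hpure
end

section
/- Let A be a unital C*-algebra that is NOT commutative (there exist a, b ∈ A with a·b ≠ b·a). Then there exists an entangled state φ on M₂(A) whose M₂-marginal is the normalized trace, i.e. φ(m.map (algebraMap ℂ A)) = (m₀₀ + m₁₁)/2 for every 2×2 complex matrix m. -/
/-!
Since `A` is not commutative, some `c : A` is not normal, so `δ = c⋆c - cc⋆` is a nonzero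
self-adjoint element. Restricting to the commutative C⋆-algebra generated by `δ`, a character takes
the value `±‖δ‖` at `δ`; a norm-preserving Hahn–Banach extension of it is a state `g` on `A`, since
contractive unital functionals on a C⋆-algebra are positive. Replacing `c` by `c⋆` if necessary,
then centering and rescaling it, gives `b` with `g b = 0`, `g (b⋆b) = 1` and `g (bb⋆ - b⋆b) < 0`.

The compression `φ x = ½ g (V⋆ x V)` by the column `V = (1, b)` is then a state on `M₂(A)` whose
`M₂(ℂ)`-marginal is the normalized trace. On the witness `W = [[bb⋆, -b⋆], [-b, 1]]` every product
state is nonnegative, because applying a state `ψ` entrywise to `W` gives a positive semidefinite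
matrix by the Cauchy–Schwarz inequality `|ψ b|² ≤ ψ (bb⋆)`; but `φ W = ½ g (bb⋆ - b⋆b) < 0`.
-/

open scoped ComplexOrder

noncomputable section

/-- The state space of a unital (topological) star algebra `B`: the set of continuous linear
functionals `φ : B → ℂ` (with the weak-* topology on the dual) such that `φ 1 = 1` and
`φ (x* x) ≥ 0` for all `x`. -/
def stateSpace (B : Type*) [Ring B] [StarRing B] [Module ℂ B] [TopologicalSpace B] :
    Set (WeakDual ℂ B) :=
  {φ | φ 1 = 1 ∧ ∀ x : B, 0 ≤ φ (star x * x)}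

/-- Entrywise application of a continuous linear map to a matrix, as a continuous linear map. -/
def matrixMapCLM {k : ℕ} {B C' : Type*} [Ring B] [Module ℂ B] [TopologicalSpace B]
    [Ring C'] [Module ℂ C'] [TopologicalSpace C'] (g : B →L[ℂ] C') :
    Matrix (Fin k) (Fin k) B →L[ℂ] Matrix (Fin k) (Fin k) C' where
  toLinearMap := LinearMap.mapMatrix g.toLinearMap
  cont := by
    show Continuous fun M : Matrix (Fin k) (Fin k) B => M.map g
    exact continuous_pi fun i => continuous_pi fun j =>
      g.cont.comp ((continuous_apply j).comp (continuous_apply i))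

/-- The product state `μ ⊗ ψ` on `M_k(B)`, sending `x` to `μ (x.map ψ)`. -/
def productState {k : ℕ} {B : Type*} [Ring B] [Module ℂ B] [TopologicalSpace B]
    (μ : WeakDual ℂ (Matrix (Fin k) (Fin k) ℂ)) (ψ : WeakDual ℂ B) :
    WeakDual ℂ (Matrix (Fin k) (Fin k) B) :=
  (μ : Matrix (Fin k) (Fin k) ℂ →L[ℂ] ℂ).comp (matrixMapCLM (ψ : B →L[ℂ] ℂ))

/-- A state on `M_k(B)` is separable if it lies in the weak-* closure of the convex hull of the
product states `μ ⊗ ψ` (with `μ` a state on `M_k(ℂ)` and `ψ` a state on `B`), and entangled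
otherwise. -/
def IsSeparableState {k : ℕ} {B : Type*} [Ring B] [StarRing B] [Module ℂ B] [TopologicalSpace B]
    (φ : WeakDual ℂ (Matrix (Fin k) (Fin k) B)) : Prop :=
  φ ∈ closure (convexHull ℝ
    {χ : WeakDual ℂ (Matrix (Fin k) (Fin k) B) |
      ∃ μ ∈ stateSpace (Matrix (Fin k) (Fin k) ℂ), ∃ ψ ∈ stateSpace B, χ = productState μ ψ})

open Complex ComplexConjugate Matrix

def entanglementWitness {B : Type*} [Ring B] [StarRing B] (b : B) : Matrix (Fin 2) (Fin 2) B :=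
  !![b * star b, -star b; -b, 1]

theorem apply_nonneg_of_normSq_le {μ : WeakDual ℂ (Matrix (Fin 2) (Fin 2) ℂ)}
    (hμ : μ ∈ stateSpace (Matrix (Fin 2) (Fin 2) ℂ)) {p : ℝ} {q : ℂ} (h : normSq q ≤ p) :
    0 ≤ μ !![(p : ℂ), -conj q; -q, 1] := by
  set s := √(p - normSq q)
  have hs : s * s = p - normSq q := Real.mul_self_sqrt (sub_nonneg.mpr h)
  have : !![(p : ℂ), -conj q; -q, 1] = star !![(s : ℂ), 0; -q, 1] * !![(s : ℂ), 0; -q, 1] := by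
    ext i j
    fin_cases i <;> fin_cases j <;> simp [mul_apply, hs, ← normSq_eq_conj_mul_self]
  exact this ▸ hμ.2 _

theorem IsSeparableState.apply_nonneg {k : ℕ} {B : Type*} [Ring B] [StarRing B] [Module ℂ B]
    [TopologicalSpace B] {φ : WeakDual ℂ (Matrix (Fin k) (Fin k) B)} (hφ : IsSeparableState φ)
    {w : Matrix (Fin k) (Fin k) B}
    (hw : ∀ μ ∈ stateSpace (Matrix (Fin k) (Fin k) ℂ), ∀ ψ ∈ stateSpace B,
      0 ≤ productState μ ψ w) :
    0 ≤ φ w := by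
  change φ ∈ {χ : WeakDual ℂ (Matrix (Fin k) (Fin k) B) | 0 ≤ χ w}
  refine closure_minimal (convexHull_min ?_ ?_) ?_ hφ
  · rintro _ ⟨μ, hμ, ψ, hψ, rfl⟩
    exact hw μ hμ ψ hψ
  · intro χ₁ h₁ χ₂ h₂ a b ha hb _
    exact add_nonneg (smul_nonneg ha (show 0 ≤ χ₁ w from h₁))
      (smul_nonneg hb (show 0 ≤ χ₂ w from h₂))
  · exact isClosed_le continuous_const (WeakDual.eval_continuous w)

section StarAlgebra

variable {B : Type*} [Ring B] [StarRing B] [Algebra ℂ B] [StarModule ℂ B]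

theorem commute_of_forall_isStarNormal (h : ∀ x : B, IsStarNormal x) (a b : B) :
    Commute a b := by
  -- polarize the normality of `x + y` and `x + I • y`
  have key : ∀ x y : B, star x * y = y * star x := by
    intro x y
    have e₁ := (h (x + y)).star_comm_self.eq
    have e₂ := (h (x + I • y)).star_comm_self.eq
    have ex := (h x).star_comm_self.eq
    have ey := (h y).star_comm_self.eq
    simp only [star_add, star_smul, add_mul, mul_add, smul_mul_assoc, mul_smul_comm,
      Complex.star_def, conj_I] at e₁ e₂
    linear_combination (norm := skip)
      (1 / 2 : ℂ) • e₁ - (I / 2) • e₂ - (1 / 2 - I / 2) • ex - (1 / 2 - I / 2) • ey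
    match_scalars <;> ring_nf <;> simp [I_sq]
  simpa [Commute, SemiconjBy] using key (star a) b

theorem star_mul_self_sub_mul_star_of_sub_smul_one (c : B) (z : ℂ) :
    star (c - z • 1) * (c - z • 1) - (c - z • 1) * star (c - z • 1) =
      star c * c - c * star c := by
  simp only [star_sub, star_smul, star_one, sub_mul, mul_sub, smul_mul_assoc, mul_smul_comm,
    one_mul, mul_one]
  module

section PositiveFunctional

variable {F : Type*} [FunLike F B ℂ] [LinearMapClass F ℂ B ℂ] (ψ : F)
  (hψ : ∀ x, 0 ≤ ψ (star x * x))
include hψ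

theorem map_star_of_nonneg (a : B) : ψ (star a) = conj (ψ a) := by
  have him : ∀ x : B, (ψ (star x * x)).im = 0 := fun x => (Complex.nonneg_iff.mp (hψ x)).2.symm
  have h₀ : (ψ 1).im = 0 := by simpa using him 1
  have h₁ := him (1 + a)
  have h₂ := him (1 + I • a)
  simp only [star_add, star_one, mul_add, mul_one, add_mul, one_mul, map_add, add_im, h₀, zero_add,
    him a, add_zero, star_smul, RCLike.star_def, conj_I, neg_smul, Algebra.mul_smul_comm, neg_mul,
    Algebra.smul_mul_assoc, smul_add, smul_neg, map_neg, map_smul, smul_eq_mul, neg_im, mul_im,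
    I_re, zero_mul, I_im, mul_zero, mul_re, sub_self, neg_zero] at h₁ h₂
  apply Complex.ext <;> simp <;> linarith

theorem normSq_le_re_of_nonneg (h1 : ψ 1 = 1) (a : B) :
    normSq (ψ a) ≤ (ψ (star a * a)).re := by
  have h := (Complex.nonneg_iff.mp (hψ (a - ψ a • 1))).1
  simp only [star_sub, star_smul, star_one, sub_mul, mul_sub, smul_mul_assoc, mul_smul_comm,
    one_mul, mul_one, map_sub, map_smul, h1, map_star_of_nonneg ψ hψ, smul_eq_mul,
    Complex.star_def, sub_re, mul_re, conj_re, conj_im] at h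
  rw [normSq_apply]
  nlinarith

end PositiveFunctional

variable [TopologicalSpace B]

theorem exists_normalized_of_apply_star_mul_self_sub_pos {g : WeakDual ℂ B}
    (hg : g ∈ stateSpace B) {c : B} (hc : 0 < g (star c * c - c * star c)) :
    ∃ b : B, g b = 0 ∧ g (star b * b) = 1 ∧ g (b * star b - star b * b) < 0 := by
  set b₀ := c - g c • 1
  have hb₀ : g b₀ = 0 := by simp [b₀, hg.1]
  have hδ : g (b₀ * star b₀ - star b₀ * b₀) = -g (star c * c - c * star c) := by
    rw [← neg_sub, map_neg, star_mul_self_sub_mul_star_of_sub_smul_one]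
  set t := g (star b₀ * b₀)
  have ht : 0 < t := by
    have := add_pos_of_nonneg_of_pos (by simpa using hg.2 (star b₀)) hc
    rwa [← map_add, ← star_mul_self_sub_mul_star_of_sub_smul_one c (g c), add_sub_cancel] at this
  have htre : t = t.re := eq_re_of_ofReal_le ht.le
  have htre_pos : 0 < t.re := (Complex.pos_iff.mp ht).1
  set u : ℝ := (√t.re)⁻¹
  have hu : (u : ℂ) * u * t = 1 := by
    rw [htre]
    norm_cast
    rw [← mul_inv, Real.mul_self_sqrt htre_pos.le, inv_mul_cancel₀ htre_pos.ne']
  have hu_pos : (0 : ℂ) < u * u := by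
    exact_mod_cast mul_self_pos.mpr (inv_ne_zero (Real.sqrt_ne_zero'.mpr htre_pos))
  have hstar : star ((u : ℂ) • b₀) = (u : ℂ) • star b₀ := by
    rw [star_smul, Complex.star_def, conj_ofReal]
  refine ⟨(u : ℂ) • b₀, by rw [map_smul, hb₀, smul_zero], ?_, ?_⟩
  · rw [hstar, smul_mul_smul_comm, map_smul, smul_eq_mul, hu]
  · rw [hstar, smul_mul_smul_comm, smul_mul_smul_comm, ← smul_sub, map_smul, hδ, smul_eq_mul]
    exact mul_neg_of_pos_of_neg hu_pos (neg_lt_zero.mpr hc)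

theorem productState_entanglementWitness_nonneg {μ : WeakDual ℂ (Matrix (Fin 2) (Fin 2) ℂ)}
    (hμ : μ ∈ stateSpace (Matrix (Fin 2) (Fin 2) ℂ)) {ψ : WeakDual ℂ B} (hψ : ψ ∈ stateSpace B)
    (b : B) : 0 ≤ productState μ ψ (entanglementWitness b) := by
  have hreal : ψ (b * star b) = (ψ (b * star b)).re :=
    eq_re_of_ofReal_le (r := 0) (by simpa using hψ.2 (star b))
  have hcs : normSq (ψ b) ≤ (ψ (b * star b)).re := by
    simpa [map_star_of_nonneg ψ hψ.2] using normSq_le_re_of_nonneg ψ hψ.2 hψ.1 (star b)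
  convert apply_nonneg_of_normSq_le hμ hcs using 2
  change μ ((entanglementWitness b).map ψ) = _
  congr 1
  ext i j
  fin_cases i <;> fin_cases j <;>
    simp [entanglementWitness, map_star_of_nonneg ψ hψ.2, hψ.1, ← hreal]

end StarAlgebra

section Compression

variable {k : ℕ} {B : Type*} [Ring B] [StarRing B] [Algebra ℂ B] [TopologicalSpace B]
  [IsTopologicalRing B]

def sandwichCLM (v : Fin k → B) : Matrix (Fin k) (Fin k) B →L[ℂ] B where
  toFun x := star v ⬝ᵥ (x *ᵥ v)
  map_add' x y := by simp [add_mulVec, dotProduct_add]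
  map_smul' c x := by simp [smul_mulVec, dotProduct_smul]
  cont := continuous_const.dotProduct (continuous_id.matrix_mulVec continuous_const)

theorem sandwichCLM_apply (v : Fin k → B) (x : Matrix (Fin k) (Fin k) B) :
    sandwichCLM v x = ∑ i, ∑ j, star (v i) * x i j * v j := by
  simp [sandwichCLM, dotProduct, mulVec, Finset.mul_sum, mul_assoc]

theorem sandwichCLM_star_mul_self (v : Fin k → B) (y : Matrix (Fin k) (Fin k) B) :
    sandwichCLM v (star y * y) = ∑ i, star ((y *ᵥ v) i) * (y *ᵥ v) i := by
  change star v ⬝ᵥ ((star y * y) *ᵥ v) = _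
  rw [← mulVec_mulVec, dotProduct_mulVec, star_eq_conjTranspose, ← star_mulVec]
  rfl

theorem apply_sandwichCLM_star_mul_self_nonneg {g : WeakDual ℂ B} (hg : g ∈ stateSpace B)
    (v : Fin k → B) (y : Matrix (Fin k) (Fin k) B) : 0 ≤ g (sandwichCLM v (star y * y)) := by
  rw [sandwichCLM_star_mul_self, map_sum]
  exact Finset.sum_nonneg fun i _ => hg.2 _

def compressedState (g : WeakDual ℂ B) (b : B) : WeakDual ℂ (Matrix (Fin 2) (Fin 2) B) :=
  (2⁻¹ : ℂ) • (g : B →L[ℂ] ℂ).comp (sandwichCLM ![1, b])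

variable {g : WeakDual ℂ B} {b : B}

theorem compressedState_apply (x : Matrix (Fin 2) (Fin 2) B) :
    compressedState g b x =
      2⁻¹ * g (x 0 0 + x 0 1 * b + star b * x 1 0 + star b * x 1 1 * b) := by
  change 2⁻¹ * g (sandwichCLM ![1, b] x) = _
  simp [sandwichCLM_apply, Fin.sum_univ_two, add_assoc]

theorem compressedState_mem_stateSpace (hg : g ∈ stateSpace B) (hb : g (star b * b) = 1) :
    compressedState g b ∈ stateSpace (Matrix (Fin 2) (Fin 2) B) := by
  refine ⟨?_, fun y => mul_nonneg (by norm_num [Complex.nonneg_iff])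
    (apply_sandwichCLM_star_mul_self_nonneg hg _ y)⟩
  norm_num [compressedState_apply, hg.1, hb]

theorem compressedState_map_algebraMap [StarModule ℂ B] (hg : g ∈ stateSpace B) (hb₀ : g b = 0)
    (hb : g (star b * b) = 1) (m : Matrix (Fin 2) (Fin 2) ℂ) :
    compressedState g b (m.map (algebraMap ℂ B)) = (m 0 0 + m 1 1) / 2 := by
  simp [compressedState_apply, Algebra.algebraMap_eq_smul_one, map_star_of_nonneg g hg.2, hg.1,
    hb₀, hb]
  ring

theorem compressedState_entanglementWitness :
    compressedState g b (entanglementWitness b) = 2⁻¹ * g (b * star b - star b * b) := by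
  rw [compressedState_apply]
  congr 2
  simp [entanglementWitness]
  abel

end Compression

section CStarAlgebra

variable {A : Type*} [CStarAlgebra A]

theorem IsSelfAdjoint.norm_add_smul_one_sq_le [Nontrivial A] {a : A} (ha : IsSelfAdjoint a)
    (t : ℝ) : ‖a + (t * I) • (1 : A)‖ ^ 2 ≤ ‖a‖ ^ 2 + t ^ 2 := by
  have hstar : star (a + (t * I) • (1 : A)) * (a + (t * I) • 1) = a * a + (t ^ 2 : ℂ) • 1 := by
    simp only [star_add, star_smul, ha.star_eq, star_one, add_mul, mul_add, smul_mul_assoc,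
      mul_smul_comm, one_mul, mul_one, Complex.star_def, map_mul, conj_ofReal, conj_I]
    match_scalars
    · ring
    · ring
    · linear_combination -(t : ℂ) ^ 2 * I_sq
  calc ‖a + (t * I) • (1 : A)‖ ^ 2 = ‖a * a + (t ^ 2 : ℂ) • (1 : A)‖ := by
        rw [sq, ← CStarRing.norm_star_mul_self, hstar]
    _ ≤ ‖a‖ ^ 2 + t ^ 2 := by
        refine (norm_add_le _ _).trans (add_le_add ((norm_mul_le a a).trans_eq (sq _).symm) ?_)
        simp [norm_smul]

namespace ContinuousLinearMap

variable (g : A →L[ℂ] ℂ) (hg : ‖g‖ ≤ 1) (h1 : g 1 = 1)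
include hg h1

theorem im_apply_eq_zero_of_norm_le_one {a : A} (ha : IsSelfAdjoint a) : (g a).im = 0 := by
  have : Nontrivial A := nontrivial_of_ne 1 0 fun h => by simp [h] at h1
  have key : ∀ t : ℝ, 2 * t * (g a).im ≤ ‖a‖ ^ 2 := by
    intro t
    have hle : normSq (g (a + (t * I) • 1)) ≤ ‖a‖ ^ 2 + t ^ 2 := by
      rw [← Complex.sq_norm]
      refine le_trans ?_ (ha.norm_add_smul_one_sq_le t)
      gcongr
      exact (g.le_opNorm _).trans (mul_le_of_le_one_left (norm_nonneg _) hg)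
    simp only [map_add, map_smul, h1, smul_eq_mul, mul_one, normSq_apply, add_re, add_im,
      mul_re, mul_im, ofReal_re, ofReal_im, I_re, I_im] at hle
    nlinarith [sq_nonneg (g a).re]
  by_contra hne
  have := key ((‖a‖ ^ 2 + 1) / (2 * (g a).im))
  field_simp at this
  linarith

theorem mem_stateSpace_of_norm_le_one : (g : WeakDual ℂ A) ∈ stateSpace A := by
  refine ⟨h1, fun x => ?_⟩
  change 0 ≤ g (star x * x)
  set a := star x * x
  have him : (g a).im = 0 := g.im_apply_eq_zero_of_norm_le_one hg h1 (.star_mul_self x)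
  have hdist : ‖algebraMap ℝ A ‖a‖ - a‖ ≤ ‖a‖ := by
    have := (SpectrumRestricts.nnreal_iff_nnnorm (.star_mul_self x) le_rfl).mp
      (SpectrumRestricts.nnreal_iff.mpr spectrum_star_mul_self_nonneg)
    exact_mod_cast this
  have hle : ‖(‖a‖ : ℂ) - g a‖ ≤ ‖a‖ := by
    calc ‖(‖a‖ : ℂ) - g a‖ = ‖g (algebraMap ℝ A ‖a‖ - a)‖ := by
          rw [map_sub, Algebra.algebraMap_eq_smul_one, g.map_smul_of_tower, h1, real_smul, mul_one]
      _ ≤ ‖algebraMap ℝ A ‖a‖ - a‖ :=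
          (g.le_opNorm _).trans (mul_le_of_le_one_left (norm_nonneg _) hg)
      _ ≤ ‖a‖ := hdist
  have hre := (Complex.abs_re_le_norm _).trans hle
  rw [sub_re, ofReal_re, abs_le] at hre
  exact Complex.nonneg_iff.mpr ⟨by linarith, him.symm⟩

end ContinuousLinearMap

open StarAlgebra in
theorem exists_mem_stateSpace_apply_eq_of_mem_spectrum {a : A} [IsStarNormal a] {z : ℂ}
    (hz : z ∈ spectrum ℂ a) : ∃ g ∈ stateSpace A, g a = z := by
  let S := elemental ℂ a
  let a' : S := ⟨a, elemental.self_mem ℂ a⟩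
  have : IsClosed (S : Set A) := elemental.isClosed ℂ a
  have hz' : z ∈ spectrum ℂ a' := (StarSubalgebra.spectrum_eq S).symm ▸ hz
  have : Nontrivial S := not_subsingleton_iff_nontrivial.mp fun _ => by
    simp [spectrum.of_subsingleton] at hz'
  obtain ⟨χ, hχ⟩ := WeakDual.CharacterSpace.mem_spectrum_iff_exists.mp hz'
  -- `S` and its underlying subspace are the same subtype of `A`
  let f : StrongDual ℂ (Subalgebra.toSubmodule S.toSubalgebra) := (χ.1 : S →L[ℂ] ℂ)
  obtain ⟨g, hgf, hg⟩ := exists_extension_norm_eq _ f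
  have hf : ‖f‖ ≤ 1 := f.opNorm_le_bound zero_le_one fun x => by
    rw [one_mul]
    exact AlgHom.norm_apply_le_self χ (⟨x.1, x.2⟩ : S)
  refine ⟨g, g.mem_stateSpace_of_norm_le_one (hg.trans_le hf) ?_, ?_⟩
  · exact (hgf ⟨1, S.one_mem⟩).trans (map_one χ)
  · exact (hgf ⟨a, elemental.self_mem ℂ a⟩).trans hχ

theorem exists_mem_stateSpace_apply_star_mul_self_sub_pos (hnc : ∃ a b : A, a * b ≠ b * a) :
    ∃ g ∈ stateSpace A, ∃ c : A, 0 < g (star c * c - c * star c) := by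
  obtain ⟨a, b, hab⟩ := hnc
  have : Nontrivial A := nontrivial_of_ne _ _ hab
  obtain ⟨c, hc⟩ : ∃ c : A, ¬IsStarNormal c := by
    by_contra! h
    exact hab (commute_of_forall_isStarNormal h a b).eq
  set δ := star c * c - c * star c
  have hδ : IsSelfAdjoint δ := (IsSelfAdjoint.star_mul_self c).sub (.mul_star_self c)
  have : IsStarNormal δ := hδ.isStarNormal
  have hδ_pos : (0 : ℂ) < ‖δ‖ := by
    exact_mod_cast norm_pos_iff.mpr fun h => hc ⟨sub_eq_zero.mp h⟩
  rcases CStarAlgebra.norm_or_neg_norm_mem_spectrum hδ with h | h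
  · obtain ⟨g, hg, hgδ⟩ :=
      exists_mem_stateSpace_apply_eq_of_mem_spectrum (spectrum.algebraMap_mem ℂ h)
    exact ⟨g, hg, c, hgδ ▸ hδ_pos⟩
  · obtain ⟨g, hg, hgδ⟩ :=
      exists_mem_stateSpace_apply_eq_of_mem_spectrum (spectrum.algebraMap_mem ℂ h)
    refine ⟨g, hg, star c, ?_⟩
    rw [star_star, ← neg_sub, map_neg, hgδ]
    simpa using hδ_pos

end CStarAlgebra

/-- If `A` is a noncommutative unital C*-algebra, then there is an entangled state `φ` on
`M₂(A)` whose `M₂(ℂ)`-marginal is the normalized trace. -/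
theorem exists_entangled_state_with_trace_marginal
    {A : Type*} [CStarAlgebra A] (hnc : ∃ a b : A, a * b ≠ b * a) :
    ∃ φ ∈ stateSpace (Matrix (Fin 2) (Fin 2) A),
      ¬ IsSeparableState φ ∧
      ∀ m : Matrix (Fin 2) (Fin 2) ℂ,
        φ (m.map (algebraMap ℂ A)) = (m 0 0 + m 1 1) / 2 := by
  obtain ⟨g, hg, c, hc⟩ := exists_mem_stateSpace_apply_star_mul_self_sub_pos hnc
  obtain ⟨b, hb₀, hb, hneg⟩ := exists_normalized_of_apply_star_mul_self_sub_pos hg hc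
  refine ⟨compressedState g b, compressedState_mem_stateSpace hg hb, fun hsep => ?_,
    compressedState_map_algebraMap hg hb₀ hb⟩
  have hW := hsep.apply_nonneg fun μ hμ ψ hψ => productState_entanglementWitness_nonneg hμ hψ b
  rw [compressedState_entanglementWitness] at hW
  exact (mul_neg_of_pos_of_neg (by norm_num [Complex.pos_iff]) hneg).not_ge hW

end
end

section
/- Let A be a unital C*-algebra, k ≥ 1, and let φ be a state on M_k(A) whose M_k-marginal μ (the state m ↦ φ(m.map (algebraMap ℂ A)) on M_k(ℂ)) is pure. Then φ is the product of its marginals: writing ψ for the A-marginal of φ (the state a ↦ φ(a • 1) on A, where a • 1 is the diagonal matrix with a in every diagonal entry), one has φ(x) = μ(x.map ψ) for every x ∈ M_k(A). In particular, φ is separable. -/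
open scoped ComplexOrder

noncomputable section

/-- The inclusion of scalar matrices `M_k(ℂ) → M_k(B)`, applying `algebraMap ℂ B` entrywise. -/
def scalarMatrixCLM (k : ℕ) (B : Type*) [Ring B] [Algebra ℂ B] [TopologicalSpace B]
    [ContinuousSMul ℂ B] :
    Matrix (Fin k) (Fin k) ℂ →L[ℂ] Matrix (Fin k) (Fin k) B where
  toLinearMap := LinearMap.mapMatrix (Algebra.linearMap ℂ B)
  cont := by
    show Continuous fun M : Matrix (Fin k) (Fin k) ℂ => M.map (algebraMap ℂ B)
    refine continuous_pi fun i => continuous_pi fun j => ?_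
    simp only [Matrix.map_apply, Algebra.algebraMap_eq_smul_one]
    exact (continuous_id.matrix_elem i j).smul continuous_const

/-- The `M_k(ℂ)`-marginal of a state on `M_k(B)`: `m ↦ φ (m.map (algebraMap ℂ B))`. -/
def scalarMarginal {k : ℕ} {B : Type*} [Ring B] [Algebra ℂ B] [TopologicalSpace B]
    [ContinuousSMul ℂ B] (φ : WeakDual ℂ (Matrix (Fin k) (Fin k) B)) :
    WeakDual ℂ (Matrix (Fin k) (Fin k) ℂ) :=
  (φ : Matrix (Fin k) (Fin k) B →L[ℂ] ℂ).comp (scalarMatrixCLM k B)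

/-- The diagonal embedding `B → M_k(B)`, `a ↦ a • 1`, as a continuous linear map. -/
def diagonalCLM (k : ℕ) (B : Type*) [Ring B] [Algebra ℂ B] [TopologicalSpace B]
    [ContinuousMul B] : B →L[ℂ] Matrix (Fin k) (Fin k) B where
  toFun a := a • (1 : Matrix (Fin k) (Fin k) B)
  map_add' a b := add_smul a b _
  map_smul' c a := smul_assoc c a _
  cont := by
    refine continuous_pi fun i => continuous_pi fun j => ?_
    exact continuous_id.smul continuous_const

/-- The `B`-marginal of a state on `M_k(B)`: `a ↦ φ (a • 1)`. -/
def algebraMarginal {k : ℕ} {B : Type*} [Ring B] [Algebra ℂ B] [TopologicalSpace B]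
    [ContinuousMul B] (φ : WeakDual ℂ (Matrix (Fin k) (Fin k) B)) : WeakDual ℂ B :=
  (φ : Matrix (Fin k) (Fin k) B →L[ℂ] ℂ).comp (diagonalCLM k B)

/-!
Write `n ⊗ b` for `n.map (· • b) ∈ M_k(B)`, so that `μ n = φ (n ⊗ 1)` and `ψ b = φ (1 ⊗ b)`.
If `b = s⋆s` and `1 - b = d⋆d`, then `n ↦ φ (n ⊗ b)` is a positive functional on `M_k(ℂ)` and
`μ` minus it is the positive functional `n ↦ φ (n ⊗ d⋆d)`. A positive functional dominated by
the pure state `μ` is a multiple of `μ`, so `φ (n ⊗ b) = ψ b * μ n`. The nonnegative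
contractions `b` are exactly the elements of this form and span the C⋆-algebra `A`, so the
identity holds for all `b`; expanding `x = ∑ eᵢⱼ ⊗ xᵢⱼ` then gives `φ x = μ (x.map ψ)`.
-/

lemma Complex.eq_zero_of_forall_nonneg_add_mul {w s : ℂ} (h : ∀ t : ℝ, 0 ≤ w + t * s) :
    s = 0 := by
  have him : s.im = 0 := by
    have h0 := (Complex.nonneg_iff.mp (h 0)).2
    have h1 := (Complex.nonneg_iff.mp (h 1)).2
    simp only [Complex.ofReal_zero, Complex.ofReal_one, zero_mul, one_mul, add_zero,
      Complex.add_im] at h0 h1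
    linarith
  have hre : s.re = 0 := by
    by_contra hs
    have ht := (Complex.nonneg_iff.mp (h ((-w.re - 1) / s.re))).1
    simp only [Complex.add_re, Complex.mul_re, Complex.ofReal_re, Complex.ofReal_im, him,
      mul_zero, sub_zero, div_mul_cancel₀ _ hs] at ht
    linarith
  exact Complex.ext hre him

lemma LinearMap.eq_zero_of_nonneg_of_apply_one_eq_zero {B : Type*} [Ring B] [StarRing B]
    [Algebra ℂ B] [StarModule ℂ B] {f : B →ₗ[ℂ] ℂ}
    (hf : ∀ x, 0 ≤ f (star x * x)) (h1 : f 1 = 0) : f = 0 := by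
  ext x
  have key (c : ℂ) : 0 ≤ f (star x * x) + (c * f (star x) + star c * f x) := by
    have hexp : star (x + c • 1) * (x + c • 1) =
        star x * x + (c • star x + star c • x) + (star c * c) • 1 := by
      simp only [star_add, star_smul, star_one, add_mul, mul_add, smul_mul_assoc,
        mul_smul_comm, one_mul, mul_one]
      module
    have := hf (x + c • 1)
    rwa [hexp, map_add, map_add, map_add, map_smul, map_smul, map_smul, h1, smul_zero,
      add_zero, smul_eq_mul, smul_eq_mul] at this
  have hsum : f (star x) + f x = 0 :=
    Complex.eq_zero_of_forall_nonneg_add_mul fun t => by simpa [mul_add] using key t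
  have hdiff : Complex.I * (f (star x) - f x) = 0 :=
    Complex.eq_zero_of_forall_nonneg_add_mul fun t => by
      convert key (t * Complex.I) using 2
      simp only [star_mul', RCLike.star_def, Complex.conj_ofReal, Complex.conj_I, mul_neg, neg_mul]
      ring
  rw [mul_eq_zero, sub_eq_zero] at hdiff
  have := hdiff.resolve_left Complex.I_ne_zero
  simpa [this, ← two_mul] using hsum

section StateSpace

variable {B : Type*} [Ring B] [StarRing B] [Algebra ℂ B] [TopologicalSpace B]

lemma WeakDual.eq_zero_of_nonneg_of_apply_one_eq_zero [StarModule ℂ B] {f : WeakDual ℂ B}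
    (hf : ∀ x, 0 ≤ f (star x * x)) (h1 : f 1 = 0) : f = 0 := by
  refine DFunLike.ext _ _ fun x => ?_
  exact LinearMap.congr_fun
    (LinearMap.eq_zero_of_nonneg_of_apply_one_eq_zero (f := (f : B →L[ℂ] ℂ).toLinearMap) hf h1) x

lemma inv_smul_mem_stateSpace {f : WeakDual ℂ B} (hf : ∀ x, 0 ≤ f (star x * x)) {t : ℝ}
    (ht : 0 < t) (h1 : f 1 = t) : t⁻¹ • f ∈ stateSpace B := by
  refine ⟨?_, fun x => ?_⟩
  · change (t⁻¹ : ℝ) • f 1 = 1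
    rw [h1, Complex.real_smul, ← Complex.ofReal_mul, inv_mul_cancel₀ ht.ne', Complex.ofReal_one]
  · change 0 ≤ (t⁻¹ : ℝ) • f (star x * x)
    rw [Complex.real_smul]
    exact mul_nonneg (Complex.zero_le_real.mpr (inv_nonneg.mpr ht.le)) (hf x)

lemma eq_apply_one_smul_of_mem_extremePoints [StarModule ℂ B] {e f : WeakDual ℂ B}
    (he : e ∈ Set.extremePoints ℝ (stateSpace B)) (hf : ∀ x, 0 ≤ f (star x * x))
    (hef : ∀ x, 0 ≤ (e - f) (star x * x)) : f = f 1 • e := by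
  obtain ⟨⟨he1, -⟩, hext⟩ := he
  obtain ⟨t, hf1⟩ : ∃ t : ℝ, f 1 = t :=
    ⟨_, Complex.eq_re_of_ofReal_le (r := 0) (by simpa using hf 1)⟩
  have ht0 : 0 ≤ t := Complex.zero_le_real.mp (by simpa [hf1] using hf 1)
  have hsub1 : (e - f) 1 = ((1 - t : ℝ) : ℂ) := by
    change e 1 - f 1 = _
    rw [he1, hf1, Complex.ofReal_sub, Complex.ofReal_one]
  have ht1 : 0 ≤ 1 - t := Complex.zero_le_real.mp (hsub1 ▸ by simpa using hef 1)
  rcases ht0.eq_or_lt with rfl | ht0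
  · rw [hf1, Complex.ofReal_zero, zero_smul]
    exact WeakDual.eq_zero_of_nonneg_of_apply_one_eq_zero hf (by simp [hf1])
  rcases ht1.eq_or_lt with ht1 | ht1
  · have : e - f = 0 :=
      WeakDual.eq_zero_of_nonneg_of_apply_one_eq_zero hef (by simp [hsub1, ← ht1])
    rw [(sub_eq_zero.mp this).symm, he1, one_smul]
  have hseg : e ∈ openSegment ℝ (t⁻¹ • f) ((1 - t)⁻¹ • (e - f)) := by
    refine ⟨t, 1 - t, ht0, ht1, by ring, DFunLike.ext _ _ fun x => ?_⟩
    change t • t⁻¹ • f x + (1 - t) • (1 - t)⁻¹ • (e x - f x) = e x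
    rw [smul_smul, smul_smul, mul_inv_cancel₀ ht0.ne', mul_inv_cancel₀ ht1.ne', one_smul,
      one_smul, add_sub_cancel]
  have hfe := hext (inv_smul_mem_stateSpace hf ht0 hf1)
    (inv_smul_mem_stateSpace hef ht1 hsub1) hseg
  refine DFunLike.ext _ _ fun x => ?_
  change f x = f 1 * e x
  rw [← hfe, hf1]
  change f x = t * (t⁻¹ • f x)
  rw [Complex.real_smul, ← mul_assoc, ← Complex.ofReal_mul, mul_inv_cancel₀ ht0.ne',
    Complex.ofReal_one, one_mul]

end StateSpace

namespace Matrix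

variable {m R B : Type*} [CommSemiring R] [Semiring B] [Algebra R B]

lemma map_smul_right_mul_map_smul_right [Fintype m] (n n' : Matrix m m R) (a a' : B) :
    n.map (· • a) * n'.map (· • a') = (n * n').map (· • (a * a')) := by
  ext i j
  simp only [mul_apply, map_apply, smul_mul_smul_comm, Finset.sum_smul]

lemma star_map_smul_right [StarRing R] [StarRing B] [StarModule R B] (n : Matrix m m R)
    (a : B) : star (n.map (· • a)) = (star n).map (· • star a) := by
  ext i j
  simp only [star_apply, map_apply, star_smul]

end Matrix

section MatrixSlice

variable {k : ℕ} {B : Type*} [Ring B] [Algebra ℂ B] [TopologicalSpace B]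
  [ContinuousSMul ℂ B] (φ : WeakDual ℂ (Matrix (Fin k) (Fin k) B))

def matrixSlice : B →ₗ[ℂ] WeakDual ℂ (Matrix (Fin k) (Fin k) ℂ) where
  toFun b := (φ : Matrix (Fin k) (Fin k) B →L[ℂ] ℂ).comp
    (matrixMapCLM (ContinuousLinearMap.toSpanSingleton ℂ b))
  map_add' b c := by
    refine DFunLike.ext _ _ fun n => ?_
    change φ (n.map (· • (b + c))) = φ (n.map (· • b)) + φ (n.map (· • c))
    rw [← map_add]
    congr 1
    ext i j
    simp only [Matrix.map_apply, Matrix.add_apply, smul_add]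
  map_smul' z b := by
    refine DFunLike.ext _ _ fun n => ?_
    change φ (n.map (· • (z • b))) = z • φ (n.map (· • b))
    rw [← map_smul]
    congr 1
    ext i j
    simp only [Matrix.map_apply, Matrix.smul_apply, smul_comm z]

lemma matrixSlice_apply (b : B) (n : Matrix (Fin k) (Fin k) ℂ) :
    matrixSlice φ b n = φ (n.map (· • b)) :=
  rfl

lemma matrixSlice_one : matrixSlice φ 1 = scalarMarginal φ := by
  refine DFunLike.ext _ _ fun n => ?_
  change φ (n.map (· • 1)) = φ (n.map (algebraMap ℂ B))
  simp only [← Algebra.algebraMap_eq_smul_one]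

lemma matrixSlice_apply_one [ContinuousMul B] (b : B) :
    matrixSlice φ b 1 = algebraMarginal φ b := by
  change φ ((1 : Matrix (Fin k) (Fin k) ℂ).map (· • b)) = φ (b • 1)
  congr 1
  ext i j
  by_cases h : i = j <;> simp [h]

variable {φ} [StarRing B] [StarModule ℂ B]

lemma matrixSlice_star_mul_self_nonneg (hφ : ∀ x, 0 ≤ φ (star x * x)) (s : B)
    (n : Matrix (Fin k) (Fin k) ℂ) : 0 ≤ matrixSlice φ (star s * s) (star n * n) := by
  rw [matrixSlice_apply, ← Matrix.map_smul_right_mul_map_smul_right,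
    ← Matrix.star_map_smul_right]
  exact hφ _

lemma scalarMarginal_mem_stateSpace (hφ : φ ∈ stateSpace (Matrix (Fin k) (Fin k) B)) :
    scalarMarginal φ ∈ stateSpace (Matrix (Fin k) (Fin k) ℂ) := by
  refine ⟨?_, fun n => ?_⟩
  · change φ ((1 : Matrix (Fin k) (Fin k) ℂ).map (algebraMap ℂ B)) = 1
    rw [Matrix.map_one _ (map_zero _) (map_one _)]
    exact hφ.1
  · simpa [matrixSlice_one] using matrixSlice_star_mul_self_nonneg hφ.2 1 n

lemma algebraMarginal_mem_stateSpace [ContinuousMul B]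
    (hφ : φ ∈ stateSpace (Matrix (Fin k) (Fin k) B)) : algebraMarginal φ ∈ stateSpace B := by
  refine ⟨?_, fun a => ?_⟩
  · change φ ((1 : B) • 1) = 1
    rw [one_smul]
    exact hφ.1
  · simpa [matrixSlice_apply_one] using matrixSlice_star_mul_self_nonneg hφ.2 a 1

end MatrixSlice

section PureMarginal

variable {k : ℕ}

lemma matrixSlice_star_mul_self_eq {B : Type*} [Ring B] [StarRing B] [Algebra ℂ B]
    [StarModule ℂ B] [TopologicalSpace B] [ContinuousSMul ℂ B] [ContinuousMul B]
    {φ : WeakDual ℂ (Matrix (Fin k) (Fin k) B)} (hφ : φ ∈ stateSpace (Matrix (Fin k) (Fin k) B))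
    (hpure : scalarMarginal φ ∈ Set.extremePoints ℝ (stateSpace (Matrix (Fin k) (Fin k) ℂ)))
    {s d : B} (hsd : star s * s + star d * d = 1) :
    matrixSlice φ (star s * s) = algebraMarginal φ (star s * s) • scalarMarginal φ := by
  have hdom : ∀ n, 0 ≤ (scalarMarginal φ - matrixSlice φ (star s * s)) (star n * n) := by
    rw [← matrixSlice_one, ← hsd, map_add, add_sub_cancel_left]
    exact matrixSlice_star_mul_self_nonneg hφ.2 d
  rw [eq_apply_one_smul_of_mem_extremePoints hpure (matrixSlice_star_mul_self_nonneg hφ.2 s)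
    hdom, matrixSlice_apply_one]

lemma matrixSlice_eq_smul_scalarMarginal {A : Type*} [CStarAlgebra A]
    {φ : WeakDual ℂ (Matrix (Fin k) (Fin k) A)} (hφ : φ ∈ stateSpace (Matrix (Fin k) (Fin k) A))
    (hpure : scalarMarginal φ ∈ Set.extremePoints ℝ (stateSpace (Matrix (Fin k) (Fin k) ℂ)))
    (a : A) : matrixSlice φ a = algebraMarginal φ a • scalarMarginal φ := by
  let _ := CStarAlgebra.spectralOrder A
  have _ := CStarAlgebra.spectralOrderedRing A
  suffices matrixSlice φ = (algebraMarginal φ : A →L[ℂ] ℂ).toLinearMap.smulRight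
      (scalarMarginal φ) from LinearMap.congr_fun this a
  refine LinearMap.ext_on CStarAlgebra.span_nonneg_inter_unitClosedBall
    fun b ⟨(hb0 : 0 ≤ b), hb1⟩ => ?_
  have hb1 : b ≤ 1 := (CStarAlgebra.norm_le_one_iff_of_nonneg b hb0).mp (by simpa using hb1)
  obtain ⟨s, rfl⟩ := CStarAlgebra.nonneg_iff_eq_star_mul_self.mp hb0
  obtain ⟨d, hd⟩ := CStarAlgebra.nonneg_iff_eq_star_mul_self.mp (sub_nonneg.mpr hb1)
  exact matrixSlice_star_mul_self_eq hφ hpure (by rw [← hd, add_sub_cancel])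

end PureMarginal

section ProductState

variable {k : ℕ} {B : Type*} [Ring B] [Algebra ℂ B] [TopologicalSpace B]

lemma eq_productState_of_matrixSlice_eq [ContinuousSMul ℂ B]
    {φ : WeakDual ℂ (Matrix (Fin k) (Fin k) B)} {μ : WeakDual ℂ (Matrix (Fin k) (Fin k) ℂ)}
    {ψ : WeakDual ℂ B} (h : ∀ b, matrixSlice φ b = ψ b • μ) : φ = productState μ ψ := by
  refine DFunLike.ext _ _ fun x => ?_
  change φ x = μ (x.map ψ)
  conv_lhs => rw [x.matrix_eq_sum_single]
  conv_rhs => rw [(x.map ψ).matrix_eq_sum_single]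
  simp only [map_sum, Matrix.map_apply]
  refine Finset.sum_congr rfl fun i _ => Finset.sum_congr rfl fun j _ => ?_
  have hsingle : Matrix.single i j (x i j) = (Matrix.single i j (1 : ℂ)).map (· • x i j) := by
    ext p q
    by_cases hp : i = p <;> by_cases hq : j = q <;> simp [hp, hq]
  rw [hsingle, ← matrixSlice_apply, h]
  change ψ (x i j) * μ _ = _
  rw [← smul_eq_mul, ← map_smul, Matrix.smul_single, smul_eq_mul, mul_one]

lemma isSeparableState_productState [StarRing B] {μ : WeakDual ℂ (Matrix (Fin k) (Fin k) ℂ)}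
    {ψ : WeakDual ℂ B} (hμ : μ ∈ stateSpace (Matrix (Fin k) (Fin k) ℂ)) (hψ : ψ ∈ stateSpace B) :
    IsSeparableState (productState μ ψ) :=
  subset_closure (subset_convexHull ℝ _ ⟨μ, hμ, ψ, hψ, rfl⟩)

end ProductState

theorem eq_product_of_pure_marginal_general
    {A : Type*} [CStarAlgebra A] (k : ℕ)
    (φ : WeakDual ℂ (Matrix (Fin k) (Fin k) A))
    (hφ : φ ∈ stateSpace (Matrix (Fin k) (Fin k) A))
    (hpure : scalarMarginal φ ∈
      Set.extremePoints ℝ (stateSpace (Matrix (Fin k) (Fin k) ℂ))) :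
    (∀ x : Matrix (Fin k) (Fin k) A,
        φ x = scalarMarginal φ (x.map (algebraMarginal φ))) ∧
      IsSeparableState φ := by
  have hprod : φ = productState (scalarMarginal φ) (algebraMarginal φ) :=
    eq_productState_of_matrixSlice_eq (matrixSlice_eq_smul_scalarMarginal hφ hpure)
  refine ⟨fun x => DFunLike.congr_fun hprod x, ?_⟩
  rw [hprod]
  exact isSeparableState_productState (scalarMarginal_mem_stateSpace hφ)
    (algebraMarginal_mem_stateSpace hφ)

/-- If the `M_k(ℂ)`-marginal of a state `φ` on `M_k(A)` is pure, then `φ` is the product of its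
two marginals: `φ x = μ (x.map ψ)` where `μ` is the `M_k(ℂ)`-marginal and `ψ` is the
`A`-marginal `a ↦ φ (a • 1)`.  In particular `φ` is separable. -/
theorem eq_product_of_pure_marginal
    {A : Type*} [CStarAlgebra A] (k : ℕ) (hk : 1 ≤ k)
    (φ : WeakDual ℂ (Matrix (Fin k) (Fin k) A))
    (hφ : φ ∈ stateSpace (Matrix (Fin k) (Fin k) A))
    (hpure : scalarMarginal φ ∈
      Set.extremePoints ℝ (stateSpace (Matrix (Fin k) (Fin k) ℂ))) :
    (∀ x : Matrix (Fin k) (Fin k) A,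
        φ x = scalarMarginal φ (x.map (algebraMarginal φ))) ∧
      IsSeparableState φ :=
  eq_product_of_pure_marginal_general k φ hφ hpure

end
end

section
/- Let A be a unital C*-algebra and k ≥ 1. The set of product states on M_k(A), i.e. the set of states of the form x ↦ μ(x.map ψ) for some state μ on M_k(ℂ) and some state ψ on A, is closed in the state space of M_k(A) with respect to the weak-* topology. -/
open scoped ComplexOrder

noncomputable section

/-!
A state `φ` on `M_k(A)` has two marginals, `φ ∘ ι` on `M_k(ℂ)` for the unital embedding
`ι : M_k(ℂ) → M_k(A)` and `φ ∘ δ` on `A` for the scalar embedding `δ a = diag(a, …, a)`, and both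
are states. A product state `μ ⊗ ψ` has marginals `μ` and `ψ`, so the product states are exactly
the fixed points of `φ ↦ (φ ∘ ι) ⊗ (φ ∘ δ)`. Because `M_k(ℂ)` is finite-dimensional,
`(μ ⊗ ψ)(x) = ∑ ψ(x i j) μ(e i j)` is jointly weak-* continuous in `(μ, ψ)`, so this map is
continuous and its fixed-point set is closed.
-/

open Matrix

section ProductStates

variable {k : ℕ}

lemma productState_apply_eq_sum {B : Type*} [Ring B] [Module ℂ B] [TopologicalSpace B]
    (μ : WeakDual ℂ (Matrix (Fin k) (Fin k) ℂ)) (ψ : WeakDual ℂ B)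
    (x : Matrix (Fin k) (Fin k) B) :
    productState μ ψ x = ∑ i, ∑ j, ψ (x i j) * μ (single i j 1) := by
  change μ (x.map ψ) = _
  conv_lhs => rw [matrix_eq_sum_single (x.map ψ)]
  simp only [map_sum, map_apply]
  refine Finset.sum_congr rfl fun i _ => Finset.sum_congr rfl fun j _ => ?_
  rw [← smul_eq_mul, ← map_smul, smul_single, smul_eq_mul, mul_one]

lemma Continuous.productState {X B : Type*} [TopologicalSpace X] [Ring B] [Module ℂ B]
    [TopologicalSpace B] {μ : X → WeakDual ℂ (Matrix (Fin k) (Fin k) ℂ)} {ψ : X → WeakDual ℂ B}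
    (hμ : Continuous μ) (hψ : Continuous ψ) :
    Continuous fun t => productState (μ t) (ψ t) := by
  refine WeakDual.continuous_of_continuous_eval fun x => ?_
  simp only [productState_apply_eq_sum]
  exact continuous_finsetSum _ fun i _ => continuous_finsetSum _ fun j _ =>
    ((WeakDual.eval_continuous _).comp hψ).mul ((WeakDual.eval_continuous _).comp hμ)

lemma comp_mem_stateSpace {B C : Type*} [Ring B] [StarRing B] [Module ℂ B] [TopologicalSpace B]
    [Ring C] [StarRing C] [Module ℂ C] [TopologicalSpace C] (f : B →L[ℂ] C) (hf_one : f 1 = 1)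
    (hf_star_mul : ∀ x, f (star x * x) = star (f x) * f x) {φ : WeakDual ℂ C}
    (hφ : φ ∈ stateSpace C) : ((φ : C →L[ℂ] ℂ).comp f : WeakDual ℂ B) ∈ stateSpace B :=
  ⟨by change φ (f 1) = 1; rw [hf_one]; exact hφ.1,
    fun x => by change 0 ≤ φ (f _); rw [hf_star_mul]; exact hφ.2 _⟩

variable {A : Type*} [Ring A] [Algebra ℂ A] [TopologicalSpace A]

variable (k A) in
def Matrix.scalarCLM : A →L[ℂ] Matrix (Fin k) (Fin k) A where
  toLinearMap := (scalarAlgHom (Fin k) ℂ).toLinearMap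
  cont := (continuous_pi fun _ => continuous_id).matrix_diagonal

lemma Matrix.scalarCLM_apply (a : A) : scalarCLM k A a = scalar (Fin k) a := rfl

def rightMarginal (φ : WeakDual ℂ (Matrix (Fin k) (Fin k) A)) : WeakDual ℂ A :=
  (φ : Matrix (Fin k) (Fin k) A →L[ℂ] ℂ).comp (scalarCLM k A)

lemma continuous_rightMarginal : Continuous (rightMarginal (k := k) (A := A)) :=
  WeakDual.continuous_of_continuous_eval fun _ => WeakDual.eval_continuous _

lemma rightMarginal_mem_stateSpace [StarRing A] {φ : WeakDual ℂ (Matrix (Fin k) (Fin k) A)}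
    (hφ : φ ∈ stateSpace _) : rightMarginal φ ∈ stateSpace A := by
  refine comp_mem_stateSpace _ (map_one (scalar (Fin k))) (fun a => ?_) hφ
  simp only [scalarCLM_apply, map_mul, scalar_apply, star_eq_conjTranspose, diagonal_conjTranspose]
  rfl

lemma rightMarginal_productState {μ : WeakDual ℂ (Matrix (Fin k) (Fin k) ℂ)} (hμ : μ 1 = 1)
    (ψ : WeakDual ℂ A) : rightMarginal (productState μ ψ) = ψ := by
  refine DFunLike.ext _ _ fun a => ?_
  change μ ((scalar (Fin k) a).map ψ) = ψ a
  have : (scalar (Fin k) a).map ψ = ψ a • (1 : Matrix (Fin k) (Fin k) ℂ) := by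
    ext i j
    by_cases h : i = j <;> simp [scalar_apply, one_apply, h]
  rw [this, map_smul, hμ, smul_eq_mul, mul_one]

variable [ContinuousSMul ℂ A]

variable (k A) in
def algebraMapMatrixCLM : Matrix (Fin k) (Fin k) ℂ →L[ℂ] Matrix (Fin k) (Fin k) A :=
  matrixMapCLM (ContinuousLinearMap.toSpanSingleton ℂ 1)

lemma algebraMapMatrixCLM_apply (m : Matrix (Fin k) (Fin k) ℂ) :
    algebraMapMatrixCLM k A m = m.map (algebraMap ℂ A) := by
  ext i j
  simp [algebraMapMatrixCLM, matrixMapCLM, Algebra.algebraMap_eq_smul_one]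

def leftMarginal (φ : WeakDual ℂ (Matrix (Fin k) (Fin k) A)) :
    WeakDual ℂ (Matrix (Fin k) (Fin k) ℂ) :=
  (φ : Matrix (Fin k) (Fin k) A →L[ℂ] ℂ).comp (algebraMapMatrixCLM k A)

lemma continuous_leftMarginal : Continuous (leftMarginal (k := k) (A := A)) :=
  WeakDual.continuous_of_continuous_eval fun _ => WeakDual.eval_continuous _

lemma leftMarginal_mem_stateSpace [StarRing A] [StarModule ℂ A]
    {φ : WeakDual ℂ (Matrix (Fin k) (Fin k) A)} (hφ : φ ∈ stateSpace _) :
    leftMarginal φ ∈ stateSpace (Matrix (Fin k) (Fin k) ℂ) := by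
  refine comp_mem_stateSpace _ ?_ (fun m => ?_) hφ
  · rw [algebraMapMatrixCLM_apply]
    exact (algebraMap ℂ A).mapMatrix.map_one
  · rw [algebraMapMatrixCLM_apply, algebraMapMatrixCLM_apply, star_eq_conjTranspose,
      star_eq_conjTranspose, Matrix.map_mul, conjTranspose_map _ algebraMap_star_comm]

lemma leftMarginal_productState (μ : WeakDual ℂ (Matrix (Fin k) (Fin k) ℂ))
    {ψ : WeakDual ℂ A} (hψ : ψ 1 = 1) : leftMarginal (productState μ ψ) = μ := by
  refine DFunLike.ext _ _ fun m => ?_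
  change μ ((algebraMapMatrixCLM k A m).map ψ) = μ m
  congr 1
  ext i j
  simp [algebraMapMatrixCLM_apply, Algebra.algebraMap_eq_smul_one, hψ]

lemma exists_eq_productState_iff [StarRing A] [StarModule ℂ A]
    {φ : WeakDual ℂ (Matrix (Fin k) (Fin k) A)} (hφ : φ ∈ stateSpace _) :
    (∃ μ ∈ stateSpace (Matrix (Fin k) (Fin k) ℂ), ∃ ψ ∈ stateSpace A, φ = productState μ ψ) ↔
      productState (leftMarginal φ) (rightMarginal φ) = φ := by
  constructor
  · rintro ⟨μ, hμ, ψ, hψ, rfl⟩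
    rw [leftMarginal_productState μ hψ.1, rightMarginal_productState hμ.1]
  · intro h
    exact ⟨_, leftMarginal_mem_stateSpace hφ, _, rightMarginal_mem_stateSpace hφ, h.symm⟩

end ProductStates

theorem productStates_isClosed_general
    {A : Type*} [CStarAlgebra A] (k : ℕ) :
    IsClosed {φ : ↥(stateSpace (Matrix (Fin k) (Fin k) A)) |
      ∃ μ ∈ stateSpace (Matrix (Fin k) (Fin k) ℂ), ∃ ψ ∈ stateSpace A,
        (φ : WeakDual ℂ (Matrix (Fin k) (Fin k) A)) = productState μ ψ} := by
  have hfixed : IsClosed {φ : WeakDual ℂ (Matrix (Fin k) (Fin k) A) |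
      productState (leftMarginal φ) (rightMarginal φ) = φ} :=
    isClosed_eq (continuous_leftMarginal.productState continuous_rightMarginal) continuous_id
  convert hfixed.preimage continuous_subtype_val using 1
  ext ⟨φ, hφ⟩
  exact exists_eq_productState_iff hφ

/-- The set of product states on `M_k(A)` is weak-* closed in the state space of `M_k(A)`. -/
theorem productStates_isClosed
    {A : Type*} [CStarAlgebra A] (k : ℕ) (hk : 1 ≤ k) :
    IsClosed {φ : ↥(stateSpace (Matrix (Fin k) (Fin k) A)) |
      ∃ μ ∈ stateSpace (Matrix (Fin k) (Fin k) ℂ), ∃ ψ ∈ stateSpace A,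
        (φ : WeakDual ℂ (Matrix (Fin k) (Fin k) A)) = productState μ ψ} :=
  productStates_isClosed_general k
end
end

section
/- Let A be a unital C*-algebra and m ≥ 1, and let φ be a state on M₂(M_m(A)), viewed as realizing the triple tensor product M₂(ℂ) ⊗ M_m(ℂ) ⊗ A (outer 2×2 index, inner m×m index, entries in A). Suppose the restriction of φ to the scalar matrices, i.e. the state on M₂(M_m(ℂ)) given by M ↦ φ(M with every innermost complex entry mapped into A via algebraMap ℂ A), is entangled with respect to the decomposition M₂ versus M_m (it does not lie in the weak-* closure of the convex hull of the states x ↦ μ(x.map ν) with μ a state on M₂(ℂ) and ν a state on M_m(ℂ)). Then φ is entangled with respect to the decomposition M₂ versus M_m(A): φ does not lie in the weak-* closure of the convex hull of the states x ↦ μ(x.map ψ) with μ a state on M₂(ℂ) and ψ a state on M_m(A). -/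
open scoped ComplexOrder

noncomputable section

/-! Restriction along a weak-* continuous map is weak-* continuous and real-linear, so it carries
the closed convex hull of a set into the closed convex hull of its image. Restriction along the
amplification `M₂(M_m(ℂ)) → M₂(M_m(A))` of the scalar inclusion sends the product state `μ ⊗ ψ`
to `μ ⊗ (ψ restricted to M_m(ℂ))`, which is again a product state since the scalar inclusion is a
unital *-homomorphism. Hence it maps separable states to separable states, and a separable `φ`
would have a separable scalar restriction. -/

namespace ContinuousLinearMap

variable {𝕜 E F : Type*} [CommSemiring 𝕜] [TopologicalSpace 𝕜] [ContinuousAdd 𝕜]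
  [ContinuousConstSMul 𝕜 𝕜] [AddCommMonoid E] [Module 𝕜 E] [TopologicalSpace E]
  [AddCommMonoid F] [Module 𝕜 F] [TopologicalSpace F]

def weakDualMap (T : E →L[𝕜] F) : WeakDual 𝕜 F →L[𝕜] WeakDual 𝕜 E where
  toFun χ := (χ : F →L[𝕜] 𝕜).comp T
  map_add' _ _ := rfl
  map_smul' _ _ := rfl
  cont := WeakDual.continuous_of_continuous_eval fun x => WeakDual.eval_continuous (T x)

@[simp]
theorem weakDualMap_apply (T : E →L[𝕜] F) (χ : WeakDual 𝕜 F) (x : E) :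
    T.weakDualMap χ x = χ (T x) :=
  rfl

end ContinuousLinearMap

section States

variable {B C : Type*} [Ring B] [StarRing B] [Module ℂ B] [TopologicalSpace B]
  [Ring C] [StarRing C] [Module ℂ C] [TopologicalSpace C]

theorem weakDualMap_mem_stateSpace {T : B →L[ℂ] C} (hT_one : T 1 = 1)
    (hT_pos : ∀ x, ∃ y, T (star x * x) = star y * y) {ψ : WeakDual ℂ C}
    (hψ : ψ ∈ stateSpace C) : T.weakDualMap ψ ∈ stateSpace B := by
  refine ⟨by simpa [hT_one] using hψ.1, fun x => ?_⟩
  obtain ⟨y, hy⟩ := hT_pos x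
  simpa [hy] using hψ.2 y

theorem IsSeparableState.weakDualMap_matrixMapCLM {k : ℕ} {T : B →L[ℂ] C} (hT_one : T 1 = 1)
    (hT_pos : ∀ x, ∃ y, T (star x * x) = star y * y)
    {φ : WeakDual ℂ (Matrix (Fin k) (Fin k) C)} (hφ : IsSeparableState φ) :
    IsSeparableState ((matrixMapCLM T).weakDualMap φ) := by
  set R := (matrixMapCLM (k := k) T).weakDualMap
  have hR_products : R '' {χ | ∃ μ ∈ stateSpace (Matrix (Fin k) (Fin k) ℂ),
      ∃ ψ ∈ stateSpace C, χ = productState μ ψ} ⊆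
      {χ | ∃ μ ∈ stateSpace (Matrix (Fin k) (Fin k) ℂ),
      ∃ ψ ∈ stateSpace B, χ = productState μ ψ} := by
    rintro - ⟨-, ⟨μ, hμ, ψ, hψ, rfl⟩, rfl⟩
    exact ⟨μ, hμ, T.weakDualMap ψ, weakDualMap_mem_stateSpace hT_one hT_pos hψ, rfl⟩
  have hR_linear : IsLinearMap ℝ R := ⟨map_add R, fun _ _ => rfl⟩
  have hRφ := image_closure_subset_closure_image R.continuous (Set.mem_image_of_mem R hφ)
  rw [hR_linear.image_convexHull] at hRφ
  exact closure_mono (convexHull_mono hR_products) hRφ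

end States

section ScalarMatrices

variable {B : Type*} [Ring B] [Algebra ℂ B] [TopologicalSpace B] [ContinuousSMul ℂ B] {k : ℕ}

theorem scalarMatrixCLM_one : scalarMatrixCLM k B 1 = 1 :=
  Matrix.map_one (algebraMap ℂ B) (map_zero _) (map_one _)

theorem scalarMatrixCLM_star_mul_self [StarRing B] [StarModule ℂ B]
    (x : Matrix (Fin k) (Fin k) ℂ) :
    scalarMatrixCLM k B (star x * x) = star (scalarMatrixCLM k B x) * scalarMatrixCLM k B x := by
  change (star x * x).map (algebraMap ℂ B) = star (x.map (algebraMap ℂ B)) * x.map (algebraMap ℂ B)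
  rw [Matrix.map_mul, Matrix.star_eq_conjTranspose, Matrix.star_eq_conjTranspose,
    Matrix.conjTranspose_map _ algebraMap_star_comm]

end ScalarMatrices

theorem entangled_of_scalar_restriction_entangled_general
    {A : Type*} [CStarAlgebra A] (m : ℕ)
    (φ : WeakDual ℂ (Matrix (Fin 2) (Fin 2) (Matrix (Fin m) (Fin m) A)))
    (hent : ¬ IsSeparableState
      (((φ : Matrix (Fin 2) (Fin 2) (Matrix (Fin m) (Fin m) A) →L[ℂ] ℂ).comp
          (matrixMapCLM (scalarMatrixCLM m A)) :
        WeakDual ℂ (Matrix (Fin 2) (Fin 2) (Matrix (Fin m) (Fin m) ℂ))))) :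
    ¬ IsSeparableState φ := fun hsep =>
  hent (hsep.weakDualMap_matrixMapCLM scalarMatrixCLM_one
    fun x => ⟨_, scalarMatrixCLM_star_mul_self x⟩)

/-- If `φ` is a state on `M₂(M_m(A))` (realizing `M₂(ℂ) ⊗ M_m(ℂ) ⊗ A`) whose restriction to the
scalar matrices `M₂(M_m(ℂ))` is entangled with respect to the decomposition `M₂` versus `M_m`,
then `φ` is entangled with respect to the decomposition `M₂` versus `M_m(A)`. -/
theorem entangled_of_scalar_restriction_entangled
    {A : Type*} [CStarAlgebra A] (m : ℕ) (hm : 1 ≤ m)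
    (φ : WeakDual ℂ (Matrix (Fin 2) (Fin 2) (Matrix (Fin m) (Fin m) A)))
    (hφ : φ ∈ stateSpace (Matrix (Fin 2) (Fin 2) (Matrix (Fin m) (Fin m) A)))
    (hent : ¬ IsSeparableState
      (((φ : Matrix (Fin 2) (Fin 2) (Matrix (Fin m) (Fin m) A) →L[ℂ] ℂ).comp
          (matrixMapCLM (scalarMatrixCLM m A)) :
        WeakDual ℂ (Matrix (Fin 2) (Fin 2) (Matrix (Fin m) (Fin m) ℂ))))) :
    ¬ IsSeparableState φ :=
  entangled_of_scalar_restriction_entangled_general m φ hent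

end
end
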